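/- arXiv:1803.08415 — 13 statements merged into one kernel-verified Lean document; each statement's English description precedes it below -/
import Mathlib

section
/- In any perfect Bayesian equilibrium (σ*, β*) of the signaling game with extended-real-valued congestion costs, the equilibrium travel costs of both servers are finite: c_H(σ^t*_h, σ^t*_l) < +∞ and c_L(σ^t*_h, σ^t*_l) < +∞. -/
open Set

/-! A server can only carry infinite cost if its load exceeds its own type's share (`θ` for `H`,
`1 - θ` for `L`), by (A1) and monotonicity. Since the two loads add up to `1`, the other server is
then below its share and has finite cost, and some agents are deviating to the overloaded server.
Their deviation utility would be `-∞`, so sequential rationality would force the cost of the other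
server to be infinite as well, a contradiction. -/

theorem EReal.eq_top_of_neg_le_neg_top_sub_sub {y p q : EReal} (h : -y ≤ -⊤ - p - q) : y = ⊤ := by
  rw [EReal.neg_top, EReal.bot_sub, EReal.bot_sub, le_bot_iff, EReal.neg_eq_bot_iff] at h
  exact h

theorem lt_top_of_deviation_ge {s : Set ℝ} {g g' : ℝ → EReal} {x x' x₀ x₀' : ℝ} {p q : EReal}
    (hg : MonotoneOn g s) (hg' : MonotoneOn g' s) (hx : x ∈ s) (hx' : x' ∈ s)
    (hx₀ : x₀ ∈ s) (hx₀' : x₀' ∈ s) (hgx₀ : g x₀ < ⊤) (hg'x₀' : g' x₀' < ⊤)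
    (hsum : x + x' = x₀ + x₀') (hdev : x₀ < x → -g' x' ≤ -g x - p - q) :
    g x < ⊤ := by
  rcases le_or_gt x x₀ with hle | hlt
  · exact (hg hx hx₀ hle).trans_lt hgx₀
  · have hg'x' : g' x' < ⊤ := (hg' hx' hx₀' (by linarith)).trans_lt hg'x₀'
    refine lt_top_iff_ne_top.mpr fun htop => hg'x'.ne ?_
    exact EReal.eq_top_of_neg_le_neg_top_sub_sub (htop ▸ hdev hlt)

theorem convex_comb_mem_Icc_zero_one {θ x y : ℝ} (hθ : θ ∈ Icc (0:ℝ) 1)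
    (hx : x ∈ Icc (0:ℝ) 1) (hy : y ∈ Icc (0:ℝ) 1) : θ * x + (1 - θ) * y ∈ Icc (0:ℝ) 1 := by
  simpa only [smul_eq_mul] using
    convex_Icc (0:ℝ) 1 hx hy hθ.1 (sub_nonneg.mpr hθ.2) (add_sub_cancel θ 1)

theorem pbe_costs_finite_general (θ pth ptl Fh Fl : ℝ) (gH gL : ℝ → EReal)
    (hθ : θ ∈ Ioo (0:ℝ) 1)
    (hgH : MonotoneOn gH (Icc 0 1)) (hgL : MonotoneOn gL (Icc 0 1))
    (hA1 : gH θ < gL (1 - θ) ∧ gL (1 - θ) < ⊤ ∧ gL 0 < gH 1)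
    (sh sl dH dL : ℝ)
    (hsh : sh ∈ Icc (0:ℝ) 1) (hsl : sl ∈ Icc (0:ℝ) 1)
    -- sequential rationality of type h agents (utilities valued in ℝ ∪ {-∞})
    (hr1 : 0 < sh →
      -gL (θ * sh + (1 - θ) * (1 - sl)) - (pth : EReal) - ((Fh * dL : ℝ) : EReal) ≥
        -gH (θ * (1 - sh) + (1 - θ) * sl))
    -- sequential rationality of type l agents
    (hr3 : 0 < sl →
      -gH (θ * (1 - sh) + (1 - θ) * sl) - (ptl : EReal) - ((Fl * dH : ℝ) : EReal) ≥
        -gL (θ * sh + (1 - θ) * (1 - sl))) :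
    gH (θ * (1 - sh) + (1 - θ) * sl) < ⊤ ∧
      gL (θ * sh + (1 - θ) * (1 - sl)) < ⊤ := by
  obtain ⟨hθ0, hθ1⟩ := hθ
  have hθ_mem : θ ∈ Icc (0:ℝ) 1 := ⟨hθ0.le, hθ1.le⟩
  have hθ'_mem : 1 - θ ∈ Icc (0:ℝ) 1 := ⟨by linarith, by linarith⟩
  have hsh' : 1 - sh ∈ Icc (0:ℝ) 1 := ⟨by linarith [hsh.2], by linarith [hsh.1]⟩
  have hsl' : 1 - sl ∈ Icc (0:ℝ) 1 := ⟨by linarith [hsl.2], by linarith [hsl.1]⟩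
  have hgH_fin : gH θ < ⊤ := hA1.1.trans hA1.2.1
  constructor
  · refine lt_top_of_deviation_ge hgH hgL (convex_comb_mem_Icc_zero_one hθ_mem hsh' hsl)
      (convex_comb_mem_Icc_zero_one hθ_mem hsh hsl') hθ_mem hθ'_mem hgH_fin hA1.2.1 (by ring)
      fun hover => hr3 ?_
    nlinarith [hsh.1]
  · refine lt_top_of_deviation_ge hgL hgH (convex_comb_mem_Icc_zero_one hθ_mem hsh hsl')
      (convex_comb_mem_Icc_zero_one hθ_mem hsh' hsl) hθ'_mem hθ_mem hA1.2.1 hgH_fin (by ring)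
      fun hover => hr1 ?_
    nlinarith [hsl.1]

/-- In any PBE of the signaling game with extended-real-valued congestion costs
`c_H(sh, sl) = g_H(θ(1-sh) + (1-θ)sl)` and `c_L(sh, sl) = g_L(θ sh + (1-θ)(1-sl))`,
the equilibrium travel costs of both servers are finite. -/
theorem pbe_costs_finite (θ pth ptl pd Fh Fl : ℝ) (gH gL : ℝ → EReal)
    (hθ : θ ∈ Ioo (0:ℝ) 1) (hpth : 0 ≤ pth) (hptl : 0 < ptl)
    (hpd : 0 < pd) (hFh : 0 ≤ Fh) (hFl : 0 ≤ Fl)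
    (hgH : MonotoneOn gH (Icc 0 1)) (hgL : MonotoneOn gL (Icc 0 1))
    (hA1 : gH θ < gL (1 - θ) ∧ gL (1 - θ) < ⊤ ∧ gL 0 < gH 1)
    (sh sl dH dL bhH blH bhL blL : ℝ)
    (hsh : sh ∈ Icc (0:ℝ) 1) (hsl : sl ∈ Icc (0:ℝ) 1)
    (hdH : dH ∈ Icc (0:ℝ) 1) (hdL : dL ∈ Icc (0:ℝ) 1)
    (hbhH : bhH ∈ Icc (0:ℝ) 1) (hblH : blH = 1 - bhH)
    (hbhL : bhL ∈ Icc (0:ℝ) 1) (hblL : blL = 1 - bhL)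
    -- sequential rationality of type h agents (utilities valued in ℝ ∪ {-∞})
    (hr1 : 0 < sh →
      -gL (θ * sh + (1 - θ) * (1 - sl)) - (pth : EReal) - ((Fh * dL : ℝ) : EReal) ≥
        -gH (θ * (1 - sh) + (1 - θ) * sl))
    (hr2 : sh < 1 →
      -gL (θ * sh + (1 - θ) * (1 - sl)) - (pth : EReal) - ((Fh * dL : ℝ) : EReal) ≤
        -gH (θ * (1 - sh) + (1 - θ) * sl))
    -- sequential rationality of type l agents
    (hr3 : 0 < sl →
      -gH (θ * (1 - sh) + (1 - θ) * sl) - (ptl : EReal) - ((Fl * dH : ℝ) : EReal) ≥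
        -gL (θ * sh + (1 - θ) * (1 - sl)))
    (hr4 : sl < 1 →
      -gH (θ * (1 - sh) + (1 - θ) * sl) - (ptl : EReal) - ((Fl * dH : ℝ) : EReal) ≤
        -gL (θ * sh + (1 - θ) * (1 - sl)))
    -- operator optimality
    (hoH : ∀ x ∈ Icc (0:ℝ) 1, (-pd + Fl * blH) * x ≤ (-pd + Fl * blH) * dH)
    (hoL : ∀ x ∈ Icc (0:ℝ) 1, (-pd + Fh * bhL) * x ≤ (-pd + Fh * bhL) * dL)
    -- consistency of beliefs
    (hcons1 : 0 < θ * (1 - sh) + (1 - θ) * sl →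
      bhH = θ * (1 - sh) / (θ * (1 - sh) + (1 - θ) * sl))
    (hcons2 : 0 < θ * sh + (1 - θ) * (1 - sl) →
      bhL = θ * sh / (θ * sh + (1 - θ) * (1 - sl))) :
    gH (θ * (1 - sh) + (1 - θ) * sl) < ⊤ ∧
      gL (θ * sh + (1 - θ) * (1 - sl)) < ⊤ :=
  pbe_costs_finite_general θ pth ptl Fh Fl gH gL hθ hgH hgL hA1 sh sl dH dL hsh hsl hr1 hr3
end

section
/- In any PBE (σ*, β*): σ^t*_h = 0 (no type h agent misbehaves), β*(h|L) = 0 and β*(l|L) = 1 (the operator believes every agent on server L is of type l), and σ^d*_L = 0 (the operator never inspects agents on server L). -/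
/-!
A misbehaving type h agent must find server L at least as cheap as server H, a misbehaving
type l agent must find H strictly cheaper than L. If type h agents misbehaved, type l agents
would then not, and at `σ_l = 0` the monotonicity of the costs and (A1) make H strictly cheaper
than L — a contradiction. With `σ_h = 0`, (A1) also rules out `σ_l = 1`, so server L is visited
and Bayes' rule gives `β(h|L) = 0`; inspecting L then only costs the operator `p^d > 0`.
-/

open Set

/-- Perfect Bayesian equilibrium of the two-server misbehavior-inspection signaling game.
The strategy profile is `(sh, sl, dH, dL)` (misbehavior rates of types `h` and `l`, and the
operator's inspection probabilities on servers `H` and `L`) and the belief assessment is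
`(bhH, blH, bhL, blL)`. -/
def IsPBE (θ pth ptl pd Fh Fl : ℝ) (cH cL : ℝ → ℝ → ℝ)
    (sh sl dH dL bhH blH bhL blL : ℝ) : Prop :=
  sh ∈ Icc (0:ℝ) 1 ∧ sl ∈ Icc (0:ℝ) 1 ∧ dH ∈ Icc (0:ℝ) 1 ∧ dL ∈ Icc (0:ℝ) 1 ∧
  bhH ∈ Icc (0:ℝ) 1 ∧ blH = 1 - bhH ∧ bhL ∈ Icc (0:ℝ) 1 ∧ blL = 1 - bhL ∧
  -- sequential rationality of type h agents
  (0 < sh → -(cL sh sl) - pth - Fh * dL ≥ -(cH sh sl)) ∧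
  (sh < 1 → -(cL sh sl) - pth - Fh * dL ≤ -(cH sh sl)) ∧
  -- sequential rationality of type l agents
  (0 < sl → -(cH sh sl) - ptl - Fl * dH ≥ -(cL sh sl)) ∧
  (sl < 1 → -(cH sh sl) - ptl - Fl * dH ≤ -(cL sh sl)) ∧
  -- operator optimality on servers H and L
  (∀ x ∈ Icc (0:ℝ) 1, (-pd + Fl * blH) * x ≤ (-pd + Fl * blH) * dH) ∧
  (∀ x ∈ Icc (0:ℝ) 1, (-pd + Fh * bhL) * x ≤ (-pd + Fh * bhL) * dL) ∧
  -- consistency of beliefs (Bayes' rule)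
  (0 < θ * (1 - sh) + (1 - θ) * sl →
    bhH = θ * (1 - sh) / (θ * (1 - sh) + (1 - θ) * sl)) ∧
  (0 < θ * sh + (1 - θ) * (1 - sl) →
    bhL = θ * sh / (θ * sh + (1 - θ) * (1 - sl)))

lemma costH_lt_costL_of_sl_eq_zero {cH cL : ℝ → ℝ → ℝ} (h00 : cH 0 0 < cL 0 0)
    (hH : AntitoneOn (fun x => cH x 0) (Icc 0 1)) (hL : MonotoneOn (fun x => cL x 0) (Icc 0 1))
    {x : ℝ} (hx : x ∈ Icc 0 1) : cH x 0 < cL x 0 :=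
  have h0 : (0 : ℝ) ∈ Icc 0 1 := left_mem_Icc.2 zero_le_one
  calc cH x 0 ≤ cH 0 0 := hH h0 hx hx.1
    _ < cL 0 0 := h00
    _ ≤ cL x 0 := hL h0 hx hx.1

lemma eq_zero_of_maximizes_neg_linear {c d : ℝ} (hc : c < 0) (hd : 0 ≤ d) (hmax : c * 0 ≤ c * d) :
    d = 0 :=
  le_antisymm (nonpos_of_mul_nonneg_right (by simpa using hmax) hc) hd

namespace IsPBE

variable {θ pth ptl pd Fh Fl : ℝ} {cH cL : ℝ → ℝ → ℝ} {sh sl dH dL bhH blH bhL blL : ℝ}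

lemma costL_le_costH_of_h_misbehaves (hpth : 0 ≤ pth) (hFh : 0 ≤ Fh)
    (h : IsPBE θ pth ptl pd Fh Fl cH cL sh sl dH dL bhH blH bhL blL) (hsh : 0 < sh) :
    cL sh sl ≤ cH sh sl := by
  obtain ⟨-, -, -, hdL, -, -, -, -, hrat, -⟩ := h
  nlinarith [hrat hsh, mul_nonneg hFh hdL.1]

lemma costH_lt_costL_of_l_misbehaves (hptl : 0 < ptl) (hFl : 0 ≤ Fl)
    (h : IsPBE θ pth ptl pd Fh Fl cH cL sh sl dH dL bhH blH bhL blL) (hsl : 0 < sl) :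
    cH sh sl < cL sh sl := by
  obtain ⟨-, -, hdH, -, -, -, -, -, -, -, hrat, -⟩ := h
  nlinarith [hrat hsl, mul_nonneg hFl hdH.1]

lemma sh_eq_zero (hpth : 0 ≤ pth) (hptl : 0 < ptl) (hFh : 0 ≤ Fh) (hFl : 0 ≤ Fl)
    (h00 : cH 0 0 < cL 0 0)
    (hH : AntitoneOn (fun x => cH x 0) (Icc 0 1)) (hL : MonotoneOn (fun x => cL x 0) (Icc 0 1))
    (h : IsPBE θ pth ptl pd Fh Fl cH cL sh sl dH dL bhH blH bhL blL) : sh = 0 := by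
  obtain ⟨hsh01, hsl01, -⟩ := id h
  by_contra hne
  have hLH := h.costL_le_costH_of_h_misbehaves hpth hFh (hsh01.1.lt_of_ne' hne)
  rcases hsl01.1.eq_or_lt with hsl | hsl
  · subst hsl
    exact (costH_lt_costL_of_sl_eq_zero h00 hH hL hsh01).not_ge hLH
  · exact (h.costH_lt_costL_of_l_misbehaves hptl hFl hsl).not_ge hLH

lemma sl_lt_one_of_sh_eq_zero (hptl : 0 < ptl) (hFl : 0 ≤ Fl) (h01 : cL 0 1 < cH 0 1)
    (h : IsPBE θ pth ptl pd Fh Fl cH cL 0 sl dH dL bhH blH bhL blL) : sl < 1 := by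
  refine h.2.1.2.lt_of_ne fun hsl => ?_
  subst hsl
  exact (h.costH_lt_costL_of_l_misbehaves hptl hFl one_pos).not_gt h01

lemma bhL_eq_zero_of_sh_eq_zero (hθ : θ < 1)
    (h : IsPBE θ pth ptl pd Fh Fl cH cL 0 sl dH dL bhH blH bhL blL) (hsl : sl < 1) : bhL = 0 := by
  obtain ⟨-, -, -, -, -, -, -, -, -, -, -, -, -, -, -, hbayes⟩ := h
  have hvisited : 0 < θ * 0 + (1 - θ) * (1 - sl) := by nlinarith
  rw [hbayes hvisited, mul_zero, zero_div]

lemma dL_eq_zero_of_bhL_eq_zero (hpd : 0 < pd)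
    (h : IsPBE θ pth ptl pd Fh Fl cH cL sh sl dH dL bhH blH 0 blL) : dL = 0 := by
  obtain ⟨-, -, -, hdL, -, -, -, -, -, -, -, -, -, hopt, -⟩ := h
  refine eq_zero_of_maximizes_neg_linear (c := -pd + Fh * 0) (by linarith) hdL.1 ?_
  exact hopt 0 (left_mem_Icc.2 zero_le_one)

end IsPBE

theorem h_does_not_misbehave_general
    (θ pth ptl pd Fh Fl : ℝ) (cH cL : ℝ → ℝ → ℝ)
    (hθ : θ ∈ Ioo (0:ℝ) 1) (hpth : 0 ≤ pth) (hptl : 0 < ptl)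
    (hpd : 0 < pd) (hFh : 0 ≤ Fh) (hFl : 0 ≤ Fl)
    (hA1 : cH 0 0 < cL 0 0 ∧ cL 0 1 < cH 0 1)
    (hA2Hh : ∀ y ∈ Icc (0:ℝ) 1, StrictAntiOn (fun x => cH x y) (Icc 0 1))
    (hA2Lh : ∀ y ∈ Icc (0:ℝ) 1, StrictMonoOn (fun x => cL x y) (Icc 0 1))
    (sh sl dH dL bhH blH bhL blL : ℝ)
    (hPBE : IsPBE θ pth ptl pd Fh Fl cH cL sh sl dH dL bhH blH bhL blL)
    : sh = 0 ∧ bhL = 0 ∧ blL = 1 ∧ dL = 0 := by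
  have h0 : (0 : ℝ) ∈ Icc 0 1 := left_mem_Icc.2 zero_le_one
  obtain rfl : sh = 0 := hPBE.sh_eq_zero hpth hptl hFh hFl hA1.1
    (hA2Hh 0 h0).antitoneOn (hA2Lh 0 h0).monotoneOn
  have hsl := hPBE.sl_lt_one_of_sh_eq_zero hptl hFl hA1.2
  obtain rfl : bhL = 0 := hPBE.bhL_eq_zero_of_sh_eq_zero hθ.2 hsl
  obtain ⟨-, -, -, -, -, -, -, hblL, -⟩ := id hPBE
  exact ⟨rfl, rfl, by rw [hblL, sub_zero], hPBE.dL_eq_zero_of_bhL_eq_zero hpd⟩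

/-- In any PBE, no type h agent misbehaves, the operator believes every agent on
server L is of type l, and never inspects agents on server L. -/
theorem h_does_not_misbehave
    (θ pth ptl pd Fh Fl : ℝ) (cH cL : ℝ → ℝ → ℝ)
    (hθ : θ ∈ Ioo (0:ℝ) 1) (hpth : 0 ≤ pth) (hptl : 0 < ptl)
    (hpd : 0 < pd) (hFh : 0 ≤ Fh) (hFl : 0 ≤ Fl)
    (hA1 : cH 0 0 < cL 0 0 ∧ cL 0 1 < cH 0 1)
    (hA2Hh : ∀ y ∈ Icc (0:ℝ) 1, StrictAntiOn (fun x => cH x y) (Icc 0 1))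
    (hA2Hl : ∀ x ∈ Icc (0:ℝ) 1, StrictMonoOn (fun y => cH x y) (Icc 0 1))
    (hA2Lh : ∀ y ∈ Icc (0:ℝ) 1, StrictMonoOn (fun x => cL x y) (Icc 0 1))
    (hA2Ll : ∀ x ∈ Icc (0:ℝ) 1, StrictAntiOn (fun y => cL x y) (Icc 0 1))
    (sh sl dH dL bhH blH bhL blL : ℝ)
    (hPBE : IsPBE θ pth ptl pd Fh Fl cH cL sh sl dH dL bhH blH bhL blL)
    : sh = 0 ∧ bhL = 0 ∧ blL = 1 ∧ dL = 0 :=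
  h_does_not_misbehave_general θ pth ptl pd Fh Fl cH cL hθ hpth hptl hpd hFh hFl hA1 hA2Hh hA2Lh sh
    sl dH dL bhH blH bhL blL hPBE
end

section
/- In any PBE (σ*, β*), σ^t*_l < 1: not all type l agents misbehave. -/
open Set

/-! If every type `l` agent misbehaves, type `l` agents weakly prefer server `H` although it costs
them a positive misbehavior cost plus a nonnegative expected fine, so `c_H < c_L`. Type `h` agents
cannot then misbehave, since that needs `c_L ≤ c_H`; but with `σ^t_h = 0` assumption (A1) gives
`c_L(0,1) < c_H(0,1)`. -/

section

variable {θ pth ptl pd Fh Fl : ℝ} {cH cL : ℝ → ℝ → ℝ} {sh sl dH dL bhH blH bhL blL : ℝ}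

theorem IsPBE.cH_add_ptl_le_cL (hFl : 0 ≤ Fl)
    (hPBE : IsPBE θ pth ptl pd Fh Fl cH cL sh sl dH dL bhH blH bhL blL) (hsl : 0 < sl) :
    cH sh sl + ptl ≤ cL sh sl := by
  obtain ⟨-, -, hdH, -, -, -, -, -, -, -, hl, -⟩ := hPBE
  nlinarith [hl hsl, hdH.1]

theorem IsPBE.cL_add_pth_le_cH (hFh : 0 ≤ Fh)
    (hPBE : IsPBE θ pth ptl pd Fh Fl cH cL sh sl dH dL bhH blH bhL blL) (hsh : 0 < sh) :
    cL sh sl + pth ≤ cH sh sl := by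
  obtain ⟨-, -, -, hdL, -, -, -, -, hh, -⟩ := hPBE
  nlinarith [hh hsh, hdL.1]

end

theorem not_all_l_misbehave_general
    (θ pth ptl pd Fh Fl : ℝ) (cH cL : ℝ → ℝ → ℝ)
    (hpth : 0 ≤ pth) (hptl : 0 < ptl)
    (hFh : 0 ≤ Fh) (hFl : 0 ≤ Fl)
    (hA1 : cH 0 0 < cL 0 0 ∧ cL 0 1 < cH 0 1)
    (sh sl dH dL bhH blH bhL blL : ℝ)
    (hPBE : IsPBE θ pth ptl pd Fh Fl cH cL sh sl dH dL bhH blH bhL blL)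
    : sl < 1 := by
  refine lt_of_le_of_ne hPBE.2.1.2 fun hsl => ?_
  subst hsl
  have hl_prefers_H := hPBE.cH_add_ptl_le_cL hFl one_pos
  rcases hPBE.1.1.eq_or_lt with hsh | hsh
  · subst hsh
    linarith [hA1.2]
  · linarith [hPBE.cL_add_pth_le_cH hFh hsh]

/-- In any PBE, not all type l agents misbehave. -/
theorem not_all_l_misbehave
    (θ pth ptl pd Fh Fl : ℝ) (cH cL : ℝ → ℝ → ℝ)
    (hθ : θ ∈ Ioo (0:ℝ) 1) (hpth : 0 ≤ pth) (hptl : 0 < ptl)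
    (hpd : 0 < pd) (hFh : 0 ≤ Fh) (hFl : 0 ≤ Fl)
    (hA1 : cH 0 0 < cL 0 0 ∧ cL 0 1 < cH 0 1)
    (hA2Hh : ∀ y ∈ Icc (0:ℝ) 1, StrictAntiOn (fun x => cH x y) (Icc 0 1))
    (hA2Hl : ∀ x ∈ Icc (0:ℝ) 1, StrictMonoOn (fun y => cH x y) (Icc 0 1))
    (hA2Lh : ∀ y ∈ Icc (0:ℝ) 1, StrictMonoOn (fun x => cL x y) (Icc 0 1))
    (hA2Ll : ∀ x ∈ Icc (0:ℝ) 1, StrictAntiOn (fun y => cL x y) (Icc 0 1))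
    (sh sl dH dL bhH blH bhL blL : ℝ)
    (hPBE : IsPBE θ pth ptl pd Fh Fl cH cL sh sl dH dL bhH blH bhL blL)
    : sl < 1 :=
  not_all_l_misbehave_general θ pth ptl pd Fh Fl cH cL hpth hptl hFh hFl hA1 sh sl dH dL bhH blH bhL
    blL hPBE
end

section
/- In any PBE (σ*, β*), both servers carry a positive mass of agents: θ(1−σ^t*_h) + (1−θ)σ^t*_l > 0 and θσ^t*_h + (1−θ)(1−σ^t*_l) > 0. In particular, no pooling equilibrium (in which all agents send the same signal) exists. -/
open Set

lemma cH_lt_cL_of_pooling_on_L {cH cL : ℝ → ℝ → ℝ} (hA1 : cH 0 0 < cL 0 0)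
    (hHh : StrictAntiOn (fun x => cH x 0) (Icc 0 1))
    (hLh : StrictMonoOn (fun x => cL x 0) (Icc 0 1)) :
    cH 1 0 < cL 1 0 :=
  calc cH 1 0 < cH 0 0 := hHh (left_mem_Icc.2 zero_le_one) (right_mem_Icc.2 zero_le_one) one_pos
    _ < cL 0 0 := hA1
    _ < cL 1 0 := hLh (left_mem_Icc.2 zero_le_one) (right_mem_Icc.2 zero_le_one) one_pos

lemma eq_zero_and_eq_zero_of_convex_comb_nonpos {θ x y : ℝ} (hθ : θ ∈ Ioo 0 1)
    (hx : 0 ≤ x) (hy : 0 ≤ y) (h : θ * x + (1 - θ) * y ≤ 0) : x = 0 ∧ y = 0 := by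
  obtain ⟨hθ0, hθ1⟩ := hθ
  have hθx : θ * x = 0 := by nlinarith [mul_nonneg (sub_nonneg.2 hθ1.le) hy]
  have hθy : (1 - θ) * y = 0 := by nlinarith [mul_nonneg hθ0.le hx]
  exact ⟨(mul_eq_zero.1 hθx).resolve_left hθ0.ne',
    (mul_eq_zero.1 hθy).resolve_left (sub_ne_zero.2 hθ1.ne')⟩

theorem no_pooling_general
    (θ pth ptl pd Fh Fl : ℝ) (cH cL : ℝ → ℝ → ℝ)
    (hθ : θ ∈ Ioo (0:ℝ) 1) (hpth : 0 ≤ pth) (hptl : 0 < ptl)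
    (hFh : 0 ≤ Fh) (hFl : 0 ≤ Fl)
    (hA1 : cH 0 0 < cL 0 0 ∧ cL 0 1 < cH 0 1)
    (hA2Hh : ∀ y ∈ Icc (0:ℝ) 1, StrictAntiOn (fun x => cH x y) (Icc 0 1))
    (hA2Lh : ∀ y ∈ Icc (0:ℝ) 1, StrictMonoOn (fun x => cL x y) (Icc 0 1))
    (sh sl dH dL bhH blH bhL blL : ℝ)
    (hPBE : IsPBE θ pth ptl pd Fh Fl cH cL sh sl dH dL bhH blH bhL blL)
    : 0 < θ * (1 - sh) + (1 - θ) * sl ∧ 0 < θ * sh + (1 - θ) * (1 - sl) := by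
  obtain ⟨⟨hsh0, hsh1⟩, ⟨hsl0, hsl1⟩, ⟨hdH, -⟩, ⟨hdL, -⟩, -, -, -, -, hSRh, -, hSRl, -⟩ := hPBE
  have hFdL : 0 ≤ Fh * dL := mul_nonneg hFh hdL
  have hFdH : 0 ≤ Fl * dH := mul_nonneg hFl hdH
  constructor
  · by_contra! hH
    obtain ⟨hsh, rfl⟩ := eq_zero_and_eq_zero_of_convex_comb_nonpos hθ (sub_nonneg.2 hsh1) hsl0 hH
    obtain rfl : sh = 1 := by linarith
    have hgap := cH_lt_cL_of_pooling_on_L hA1.1 (hA2Hh 0 (left_mem_Icc.2 zero_le_one))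
      (hA2Lh 0 (left_mem_Icc.2 zero_le_one))
    linarith [hSRh one_pos]
  · by_contra! hL
    obtain ⟨rfl, hsl⟩ := eq_zero_and_eq_zero_of_convex_comb_nonpos hθ hsh0 (sub_nonneg.2 hsl1) hL
    obtain rfl : sl = 1 := by linarith
    linarith [hSRl one_pos, hA1.2]

/-- In any PBE, both servers carry a positive mass of agents; in particular no
pooling equilibrium exists. -/
theorem no_pooling
    (θ pth ptl pd Fh Fl : ℝ) (cH cL : ℝ → ℝ → ℝ)
    (hθ : θ ∈ Ioo (0:ℝ) 1) (hpth : 0 ≤ pth) (hptl : 0 < ptl)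
    (hpd : 0 < pd) (hFh : 0 ≤ Fh) (hFl : 0 ≤ Fl)
    (hA1 : cH 0 0 < cL 0 0 ∧ cL 0 1 < cH 0 1)
    (hA2Hh : ∀ y ∈ Icc (0:ℝ) 1, StrictAntiOn (fun x => cH x y) (Icc 0 1))
    (hA2Hl : ∀ x ∈ Icc (0:ℝ) 1, StrictMonoOn (fun y => cH x y) (Icc 0 1))
    (hA2Lh : ∀ y ∈ Icc (0:ℝ) 1, StrictMonoOn (fun x => cL x y) (Icc 0 1))
    (hA2Ll : ∀ x ∈ Icc (0:ℝ) 1, StrictAntiOn (fun y => cL x y) (Icc 0 1))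
    (sh sl dH dL bhH blH bhL blL : ℝ)
    (hPBE : IsPBE θ pth ptl pd Fh Fl cH cL sh sl dH dL bhH blH bhL blL)
    : 0 < θ * (1 - sh) + (1 - θ) * sl ∧ 0 < θ * sh + (1 - θ) * (1 - sl) :=
  no_pooling_general θ pth ptl pd Fh Fl cH cL hθ hpth hptl hFh hFl hA1 hA2Hh hA2Lh sh sl dH dL bhH
    blH bhL blL hPBE
end

section
/- Suppose F_l > 0 and 0 < p^d ≤ (1−θ)·F_l. In any PBE (σ*, β*), if σ^t*_l < σ̂^t_l, then β*(l|H) < p^d/F_l and σ^d*_H = 0. -/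
open Set

/-- Best response, low misbehavior: if `sl < σ̂` in a PBE, then `β*(l|H) < pd/Fl`
and the operator does not inspect server H. -/
theorem best_response_below_threshold
    (θ pth ptl pd Fh Fl : ℝ) (cH cL : ℝ → ℝ → ℝ)
    (hθ : θ ∈ Ioo (0:ℝ) 1) (hpth : 0 ≤ pth) (hptl : 0 < ptl)
    (hpd : 0 < pd) (hFh : 0 ≤ Fh) (hFl : 0 ≤ Fl)
    (hA1 : cH 0 0 < cL 0 0 ∧ cL 0 1 < cH 0 1)
    (hA2Hh : ∀ y ∈ Icc (0:ℝ) 1, StrictAntiOn (fun x => cH x y) (Icc 0 1))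
    (hA2Hl : ∀ x ∈ Icc (0:ℝ) 1, StrictMonoOn (fun y => cH x y) (Icc 0 1))
    (hA2Lh : ∀ y ∈ Icc (0:ℝ) 1, StrictMonoOn (fun x => cL x y) (Icc 0 1))
    (hA2Ll : ∀ x ∈ Icc (0:ℝ) 1, StrictAntiOn (fun y => cL x y) (Icc 0 1))
    (hFl' : 0 < Fl) (hpdle : pd ≤ (1 - θ) * Fl)
    (sh sl dH dL bhH blH bhL blL : ℝ)
    (hPBE : IsPBE θ pth ptl pd Fh Fl cH cL sh sl dH dL bhH blH bhL blL)
    (hlt : sl < pd * θ / ((1 - θ) * (Fl - pd))) :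
    blH < pd / Fl ∧ dH = 0 := by

  obtain ⟨hθ0, hθ1⟩ := hθ
  obtain ⟨hsh, hsl, hdH, hdL, hbhH, hblHe, hbhL, hblLe, srh1, srh2, srl1, srl2,
    opH, opL, bayesH, bayesL⟩ := hPBE
  have h1θ : 0 < 1 - θ := by linarith
  have hFlpd : 0 < Fl - pd := by nlinarith
  -- sh = 0
  have hsh0 : sh = 0 := by
    by_contra h
    have hshpos : 0 < sh := lt_of_le_of_ne hsh.1 (Ne.symm h)
    have h1 := srh1 hshpos
    have hFhdL : 0 ≤ Fh * dL := mul_nonneg hFh hdL.1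
    have hcge : cL sh sl ≤ cH sh sl := by linarith
    rcases eq_or_lt_of_le hsl.1 with hsl0 | hslpos
    · have hcH : cH sh 0 < cH 0 0 :=
        hA2Hh 0 ⟨le_refl 0, by norm_num⟩ ⟨le_refl 0, by norm_num⟩ ⟨hsh.1, hsh.2⟩ hshpos
      have hcL : cL 0 0 < cL sh 0 :=
        hA2Lh 0 ⟨le_refl 0, by norm_num⟩ ⟨le_refl 0, by norm_num⟩ ⟨hsh.1, hsh.2⟩ hshpos
      rw [← hsl0] at hcge
      linarith [hA1.1]
    · have h2 := srl1 hslpos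
      have hFldH : 0 ≤ Fl * dH := mul_nonneg hFl hdH.1
      linarith
  -- denominator positive
  have hD : 0 < θ * (1 - sh) + (1 - θ) * sl := by
    rw [hsh0]
    have : 0 ≤ (1 - θ) * sl := mul_nonneg h1θ.le hsl.1
    nlinarith
  have hbH := bayesH hD
  have hblH : blH = (1 - θ) * sl / (θ * (1 - sh) + (1 - θ) * sl) := by
    rw [hblHe, hbH]
    field_simp
    ring
  have hkey : sl * ((1 - θ) * (Fl - pd)) < pd * θ :=
    (lt_div_iff₀ (by positivity)).mp hlt
  have hmain : blH < pd / Fl := by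
    rw [hblH, hsh0, div_lt_div_iff₀ (by rw [hsh0] at hD; exact hD) hFl']
    nlinarith
  refine ⟨hmain, ?_⟩
  have hcoef : -pd + Fl * blH < 0 := by
    nlinarith [(lt_div_iff₀ hFl').mp hmain]
  have h0 := opH 0 ⟨le_refl 0, by norm_num⟩
  simp at h0
  have hdHle : dH ≤ 0 := by nlinarith [hdH.1]
  linarith [hdH.1, hdHle]
end

section
/- Suppose F_l > 0 and 0 < p^d ≤ (1−θ)·F_l. In any PBE (σ*, β*), if σ^t*_l = σ̂^t_l, then β*(l|H) = p^d/F_l; consequently −p^d + F_l·β*(l|H) = 0, so the operator's expected utility on server H is 0 for every inspection rate, and every x ∈ [0,1] is an optimal inspection rate on server H. -/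
open Set

/-- Best response, threshold misbehavior: if `sl = σ̂` in a PBE, then `β*(l|H) = pd/Fl`,
the operator's expected utility on server H is 0 for every inspection rate, and every
`x ∈ [0,1]` is an optimal inspection rate on server H. -/
theorem best_response_at_threshold
    (θ pth ptl pd Fh Fl : ℝ) (cH cL : ℝ → ℝ → ℝ)
    (hθ : θ ∈ Ioo (0:ℝ) 1) (hpth : 0 ≤ pth) (hptl : 0 < ptl)
    (hpd : 0 < pd) (hFh : 0 ≤ Fh) (hFl : 0 ≤ Fl)
    (hA1 : cH 0 0 < cL 0 0 ∧ cL 0 1 < cH 0 1)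
    (hA2Hh : ∀ y ∈ Icc (0:ℝ) 1, StrictAntiOn (fun x => cH x y) (Icc 0 1))
    (hA2Hl : ∀ x ∈ Icc (0:ℝ) 1, StrictMonoOn (fun y => cH x y) (Icc 0 1))
    (hA2Lh : ∀ y ∈ Icc (0:ℝ) 1, StrictMonoOn (fun x => cL x y) (Icc 0 1))
    (hA2Ll : ∀ x ∈ Icc (0:ℝ) 1, StrictAntiOn (fun y => cL x y) (Icc 0 1))
    (hFl' : 0 < Fl) (hpdle : pd ≤ (1 - θ) * Fl)
    (sh sl dH dL bhH blH bhL blL : ℝ)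
    (hPBE : IsPBE θ pth ptl pd Fh Fl cH cL sh sl dH dL bhH blH bhL blL)
    (heq : sl = pd * θ / ((1 - θ) * (Fl - pd))) :
    blH = pd / Fl ∧ -pd + Fl * blH = 0 ∧
      (∀ x ∈ Icc (0:ℝ) 1, (-pd + Fl * blH) * x = 0) ∧
      (∀ x ∈ Icc (0:ℝ) 1, ∀ y ∈ Icc (0:ℝ) 1,
        (-pd + Fl * blH) * y ≤ (-pd + Fl * blH) * x) := by
  obtain ⟨hθ0, hθ1⟩ := hθ
  obtain ⟨hsh, hsl, hdH, hdL, hbhH, hblH, hbhL, hblL, h1, h2, h3, h4, h5, h6, h7, h8⟩ := hPBE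
  have hFlpd : 0 < Fl - pd := by nlinarith
  have hsl0 : 0 < sl := by
    rw [heq]
    apply div_pos (by positivity)
    nlinarith
  have hsh0 : sh = 0 := by
    by_contra hne
    have hshpos : 0 < sh := lt_of_le_of_ne hsh.1 (Ne.symm hne)
    have := h1 hshpos
    have := h3 hsl0
    nlinarith [hdH.1, hdL.1]
  have hden : 0 < θ * (1 - sh) + (1 - θ) * sl := by
    rw [hsh0]; nlinarith
  have hbh := h7 hden
  have hblHval : blH = pd / Fl := by
    rw [hblH, hbh, hsh0, heq]
    have h1θ : (0:ℝ) < 1 - θ := by linarith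
    field_simp
    ring
  refine ⟨hblHval, ?_, ?_, ?_⟩
  · rw [hblHval]; field_simp; ring
  · intro x hx; rw [hblHval]; field_simp; ring
  · intro x hx y hy; rw [hblHval]
    have : -pd + Fl * (pd / Fl) = 0 := by field_simp; ring
    rw [this]; simp
end

section
/- Suppose F_l > 0 and 0 < p^d ≤ (1−θ)·F_l. In any PBE (σ*, β*), if σ^t*_l > σ̂^t_l, then β*(l|H) > p^d/F_l and σ^d*_H = 1. -/
open Set

/-! A misbehavior rate above the threshold makes type `l` agents so frequent on server `H` that
the posterior `β(l|H)` exceeds the break-even belief `pd / Fl` of an inspection; the operator's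
payoff on `H` is then strictly increasing in the inspection probability, so it inspects surely. -/

theorem one_sub_bayes_posterior {θ sh sl b : ℝ} (hD : 0 < θ * (1 - sh) + (1 - θ) * sl)
    (hb : b = θ * (1 - sh) / (θ * (1 - sh) + (1 - θ) * sl)) :
    1 - b = (1 - θ) * sl / (θ * (1 - sh) + (1 - θ) * sl) := by
  rw [hb, eq_div_iff hD.ne', sub_mul, div_mul_cancel₀ _ hD.ne']
  ring

theorem pos_of_threshold_lt {θ sl pd Fl : ℝ} (hθ : θ ∈ Ioo (0:ℝ) 1) (hpd : 0 < pd)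
    (hpdFl : pd < Fl) (hgt : pd * θ / ((1 - θ) * (Fl - pd)) < sl) : 0 < sl :=
  lt_trans (div_pos (mul_pos hpd hθ.1) (mul_pos (sub_pos.2 hθ.2) (sub_pos.2 hpdFl))) hgt

theorem div_lt_posterior_of_threshold_lt {θ sh sl pd Fl : ℝ} (hθ : θ ∈ Ioo (0:ℝ) 1)
    (hsh : 0 ≤ sh) (hpd : 0 < pd) (hpdFl : pd < Fl)
    (hD : 0 < θ * (1 - sh) + (1 - θ) * sl) (hgt : pd * θ / ((1 - θ) * (Fl - pd)) < sl) :
    pd / Fl < (1 - θ) * sl / (θ * (1 - sh) + (1 - θ) * sl) := by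
  obtain ⟨hθ0, hθ1⟩ := hθ
  have hden : 0 < (1 - θ) * (Fl - pd) := mul_pos (sub_pos.2 hθ1) (sub_pos.2 hpdFl)
  rw [div_lt_iff₀ hden] at hgt
  rw [div_lt_div_iff₀ (hpd.trans hpdFl) hD]
  -- `pd * D < Fl * (1 - θ) * sl` reduces to `pd * θ * (1 - sh) < (1 - θ) * (Fl - pd) * sl`
  nlinarith [mul_nonneg (mul_nonneg hpd.le hθ0.le) hsh]

theorem eq_one_of_forall_mul_le {c d : ℝ} (hc : 0 < c) (hd : d ≤ 1)
    (hmax : ∀ x ∈ Icc (0:ℝ) 1, c * x ≤ c * d) : d = 1 :=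
  le_antisymm hd <| le_of_mul_le_mul_left (by simpa using hmax 1 ⟨zero_le_one, le_rfl⟩) hc

theorem best_response_above_threshold_general
    (θ pth ptl pd Fh Fl : ℝ) (cH cL : ℝ → ℝ → ℝ)
    (hθ : θ ∈ Ioo (0:ℝ) 1)
    (hpd : 0 < pd)
    (hFl' : 0 < Fl) (hpdle : pd ≤ (1 - θ) * Fl)
    (sh sl dH dL bhH blH bhL blL : ℝ)
    (hPBE : IsPBE θ pth ptl pd Fh Fl cH cL sh sl dH dL bhH blH bhL blL)
    (hgt : pd * θ / ((1 - θ) * (Fl - pd)) < sl) :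
    pd / Fl < blH ∧ dH = 1 := by
  obtain ⟨hsh, -, hdH, -, -, hblH, -, -, -, -, -, -, hopH, -, hbayesH, -⟩ := hPBE
  have hpdFl : pd < Fl := by nlinarith [hθ.1]
  have hsl := pos_of_threshold_lt hθ hpd hpdFl hgt
  have hD : 0 < θ * (1 - sh) + (1 - θ) * sl := by nlinarith [hsh.2, hθ.1, hθ.2]
  have hbelief := div_lt_posterior_of_threshold_lt hθ hsh.1 hpd hpdFl hD hgt
  rw [← one_sub_bayes_posterior hD (hbayesH hD), ← hblH] at hbelief
  refine ⟨hbelief, eq_one_of_forall_mul_le ?_ hdH.2 hopH⟩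
  rw [div_lt_iff₀' hFl'] at hbelief
  linarith

/-- Best response, high misbehavior: if `sl > σ̂` in a PBE, then `β*(l|H) > pd/Fl`
and the operator inspects server H with probability one. -/
theorem best_response_above_threshold
    (θ pth ptl pd Fh Fl : ℝ) (cH cL : ℝ → ℝ → ℝ)
    (hθ : θ ∈ Ioo (0:ℝ) 1) (hpth : 0 ≤ pth) (hptl : 0 < ptl)
    (hpd : 0 < pd) (hFh : 0 ≤ Fh) (hFl : 0 ≤ Fl)
    (hA1 : cH 0 0 < cL 0 0 ∧ cL 0 1 < cH 0 1)
    (hA2Hh : ∀ y ∈ Icc (0:ℝ) 1, StrictAntiOn (fun x => cH x y) (Icc 0 1))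
    (hA2Hl : ∀ x ∈ Icc (0:ℝ) 1, StrictMonoOn (fun y => cH x y) (Icc 0 1))
    (hA2Lh : ∀ y ∈ Icc (0:ℝ) 1, StrictMonoOn (fun x => cL x y) (Icc 0 1))
    (hA2Ll : ∀ x ∈ Icc (0:ℝ) 1, StrictAntiOn (fun y => cL x y) (Icc 0 1))
    (hFl' : 0 < Fl) (hpdle : pd ≤ (1 - θ) * Fl)
    (sh sl dH dL bhH blH bhL blL : ℝ)
    (hPBE : IsPBE θ pth ptl pd Fh Fl cH cL sh sl dH dL bhH blH bhL blL)
    (hgt : pd * θ / ((1 - θ) * (Fl - pd)) < sl) :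
    pd / Fl < blH ∧ dH = 1 :=
  best_response_above_threshold_general θ pth ptl pd Fh Fl cH cL hθ hpd hFl' hpdle sh sl dH dL bhH
    blH bhL blL hPBE hgt
end

section
/- If p^d > (1−θ)·F_l, then in any PBE (σ*, β*), β*(l|H) ≤ 1−θ < p^d/F_l and hence σ^d*_H = 0 (assuming F_l > 0; if F_l = 0 the conclusion σ^d*_H = 0 also holds since the operator's payoff from inspection is −p^d·x). -/
open Set

/-!
In equilibrium the two types never misbehave simultaneously: adding their two incentive
constraints would give `pth + ptl + Fh * dL + Fl * dH ≤ 0`. Nor can every type `h` agent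
misbehave, since then nobody of type `l` does and (A1), (A2) make server `H` strictly cheaper.
So server `H` carries a positive mass of type `h` agents and at most `1 - θ` of type `l`, Bayes'
rule gives `β(l|H) ≤ 1 - θ`, and inspecting `H` has expected payoff `-pd + Fl * β(l|H) < 0`.
-/

theorem prior_le_posterior_of_le {θ a b : ℝ} (hθ₀ : 0 ≤ θ) (hθ₁ : θ ≤ 1)
    (hba : b ≤ a) (hpos : 0 < θ * a + (1 - θ) * b) :
    θ ≤ θ * a / (θ * a + (1 - θ) * b) := by
  rw [le_div_iff₀ hpos]
  nlinarith [mul_nonneg hθ₀ (sub_nonneg.2 hθ₁)]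

namespace IsPBE

variable {θ pth ptl pd Fh Fl : ℝ} {cH cL : ℝ → ℝ → ℝ}
  {sh sl dH dL bhH blH bhL blL : ℝ}

theorem misbehavior_eq_zero_or
    (hE : IsPBE θ pth ptl pd Fh Fl cH cL sh sl dH dL bhH blH bhL blL)
    (hpth : 0 ≤ pth) (hptl : 0 < ptl) (hFh : 0 ≤ Fh) (hFl : 0 ≤ Fl) :
    sh = 0 ∨ sl = 0 := by
  obtain ⟨hsh, hsl, hdH, hdL, -, -, -, -, hh, -, hl, -⟩ := hE
  by_contra! ⟨hsh0, hsl0⟩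
  have := hh (lt_of_le_of_ne hsh.1 hsh0.symm)
  have := hl (lt_of_le_of_ne hsl.1 hsl0.symm)
  linarith [mul_nonneg hFh hdL.1, mul_nonneg hFl hdH.1]

theorem misbehavior_h_lt_one
    (hE : IsPBE θ pth ptl pd Fh Fl cH cL sh sl dH dL bhH blH bhL blL)
    (hpth : 0 ≤ pth) (hptl : 0 < ptl) (hFh : 0 ≤ Fh) (hFl : 0 ≤ Fl)
    (hA1 : cH 0 0 < cL 0 0)
    (hHh : StrictAntiOn (fun x => cH x 0) (Icc 0 1))
    (hLh : StrictMonoOn (fun x => cL x 0) (Icc 0 1)) :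
    sh < 1 := by
  refine lt_of_le_of_ne hE.1.2 fun hsh1 => ?_
  have hsl0 : sl = 0 :=
    (hE.misbehavior_eq_zero_or hpth hptl hFh hFl).resolve_left (by simp [hsh1])
  obtain ⟨-, -, -, hdL, -, -, -, -, hh, -⟩ := hE
  have hh := hh (by simp [hsh1])
  rw [hsh1, hsl0] at hh
  have h0 : (0:ℝ) ∈ Icc (0:ℝ) 1 := left_mem_Icc.2 zero_le_one
  have h1 : (1:ℝ) ∈ Icc (0:ℝ) 1 := right_mem_Icc.2 zero_le_one
  have hcH : cH 1 0 < cH 0 0 := hHh h0 h1 one_pos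
  have hcL : cL 0 0 < cL 1 0 := hLh h0 h1 one_pos
  linarith [mul_nonneg hFh hdL.1]

theorem belief_l_H_le
    (hE : IsPBE θ pth ptl pd Fh Fl cH cL sh sl dH dL bhH blH bhL blL)
    (hθ : θ ∈ Ioo (0:ℝ) 1) (hsh : sh < 1) (hsum : sh = 0 ∨ sl = 0) :
    blH ≤ 1 - θ := by
  obtain ⟨-, hsl, -, -, -, hblH, -, -, -, -, -, -, -, -, hbhH, -⟩ := hE
  have hpos : 0 < θ * (1 - sh) + (1 - θ) * sl :=
    add_pos_of_pos_of_nonneg (mul_pos hθ.1 (sub_pos.2 hsh))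
      (mul_nonneg (sub_nonneg.2 hθ.2.le) hsl.1)
  have hsl_le : sl ≤ 1 - sh := by rcases hsum with h | h <;> simp [h, hsl.2, hsh.le]
  have := prior_le_posterior_of_le hθ.1.le hθ.2.le hsl_le hpos
  rw [← hbhH hpos] at this
  linarith

theorem inspect_H_eq_zero
    (hE : IsPBE θ pth ptl pd Fh Fl cH cL sh sl dH dL bhH blH bhL blL)
    (hc : -pd + Fl * blH < 0) :
    dH = 0 := by
  obtain ⟨-, -, hdH, -, -, -, -, -, -, -, -, -, hopt, -⟩ := hE
  have h0 := hopt 0 (left_mem_Icc.2 zero_le_one)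
  rw [mul_zero] at h0
  exact le_antisymm (nonpos_of_mul_nonneg_right h0 hc) hdH.1

end IsPBE

theorem high_inspection_cost_no_inspection_general
    (θ pth ptl pd Fh Fl : ℝ) (cH cL : ℝ → ℝ → ℝ)
    (hθ : θ ∈ Ioo (0:ℝ) 1) (hpth : 0 ≤ pth) (hptl : 0 < ptl)
    (hFh : 0 ≤ Fh) (hFl : 0 ≤ Fl)
    (hA1 : cH 0 0 < cL 0 0 ∧ cL 0 1 < cH 0 1)
    (hA2Hh : ∀ y ∈ Icc (0:ℝ) 1, StrictAntiOn (fun x => cH x y) (Icc 0 1))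
    (hA2Lh : ∀ y ∈ Icc (0:ℝ) 1, StrictMonoOn (fun x => cL x y) (Icc 0 1))
    (sh sl dH dL bhH blH bhL blL : ℝ)
    (hPBE : IsPBE θ pth ptl pd Fh Fl cH cL sh sl dH dL bhH blH bhL blL)
    (hgt : (1 - θ) * Fl < pd) :
    blH ≤ 1 - θ ∧ (0 < Fl → 1 - θ < pd / Fl) ∧ dH = 0 := by
  have h0 : (0:ℝ) ∈ Icc (0:ℝ) 1 := left_mem_Icc.2 zero_le_one
  have hsh : sh < 1 :=
    hPBE.misbehavior_h_lt_one hpth hptl hFh hFl hA1.1 (hA2Hh 0 h0) (hA2Lh 0 h0)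
  have hblH : blH ≤ 1 - θ :=
    hPBE.belief_l_H_le hθ hsh (hPBE.misbehavior_eq_zero_or hpth hptl hFh hFl)
  refine ⟨hblH, fun hFl0 => (lt_div_iff₀ hFl0).2 (by linarith), hPBE.inspect_H_eq_zero ?_⟩
  linarith [mul_le_mul_of_nonneg_left hblH hFl]

/-- If the inspection cost exceeds the maximal expected fine `(1-θ) * Fl`, then in any
PBE `β*(l|H) ≤ 1-θ < pd/Fl` (the latter when `Fl > 0`) and the operator never inspects
server H. -/
theorem high_inspection_cost_no_inspection
    (θ pth ptl pd Fh Fl : ℝ) (cH cL : ℝ → ℝ → ℝ)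
    (hθ : θ ∈ Ioo (0:ℝ) 1) (hpth : 0 ≤ pth) (hptl : 0 < ptl)
    (hpd : 0 < pd) (hFh : 0 ≤ Fh) (hFl : 0 ≤ Fl)
    (hA1 : cH 0 0 < cL 0 0 ∧ cL 0 1 < cH 0 1)
    (hA2Hh : ∀ y ∈ Icc (0:ℝ) 1, StrictAntiOn (fun x => cH x y) (Icc 0 1))
    (hA2Hl : ∀ x ∈ Icc (0:ℝ) 1, StrictMonoOn (fun y => cH x y) (Icc 0 1))
    (hA2Lh : ∀ y ∈ Icc (0:ℝ) 1, StrictMonoOn (fun x => cL x y) (Icc 0 1))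
    (hA2Ll : ∀ x ∈ Icc (0:ℝ) 1, StrictAntiOn (fun y => cL x y) (Icc 0 1))
    (sh sl dH dL bhH blH bhL blL : ℝ)
    (hPBE : IsPBE θ pth ptl pd Fh Fl cH cL sh sl dH dL bhH blH bhL blL)
    (hgt : (1 - θ) * Fl < pd) :
    blH ≤ 1 - θ ∧ (0 < Fl → 1 - θ < pd / Fl) ∧ dH = 0 :=
  high_inspection_cost_no_inspection_general θ pth ptl pd Fh Fl cH cL hθ hpth hptl hFh hFl hA1 hA2Hh
    hA2Lh sh sl dH dL bhH blH bhL blL hPBE hgt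
end

section
/- (Regime A.) Suppose p^t_l > Δc^θ(0). Then the pair (σ*, β*) with σ^t*_h = 0, σ^t*_l = 0, σ^d*_H = 0, σ^d*_L = 0, β*(h|H) = 1, β*(l|H) = 0, β*(h|L) = 0, β*(l|L) = 1 is a PBE, and every PBE of the game equals this pair: misbehavior is completely deterred and no inspection occurs. -/
open Set

/-- Regime A: if `pᵗ_l > Δcᵗʰ(0)`, the no-misbehavior, no-inspection profile with
beliefs `β*(h|H) = 1`, `β*(l|L) = 1` is a PBE, and it is the unique PBE. -/
theorem regime_A
    (θ pth ptl pd Fh Fl : ℝ) (cH cL : ℝ → ℝ → ℝ)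
    (hθ : θ ∈ Ioo (0:ℝ) 1) (hpth : 0 ≤ pth) (hptl : 0 < ptl)
    (hpd : 0 < pd) (hFh : 0 ≤ Fh) (hFl : 0 ≤ Fl)
    (hA1 : cH 0 0 < cL 0 0 ∧ cL 0 1 < cH 0 1)
    (hA2Hh : ∀ y ∈ Icc (0:ℝ) 1, StrictAntiOn (fun x => cH x y) (Icc 0 1))
    (hA2Hl : ∀ x ∈ Icc (0:ℝ) 1, StrictMonoOn (fun y => cH x y) (Icc 0 1))
    (hA2Lh : ∀ y ∈ Icc (0:ℝ) 1, StrictMonoOn (fun x => cL x y) (Icc 0 1))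
    (hA2Ll : ∀ x ∈ Icc (0:ℝ) 1, StrictAntiOn (fun y => cL x y) (Icc 0 1))
    (hreg : cL 0 0 - cH 0 0 < ptl) :
    IsPBE θ pth ptl pd Fh Fl cH cL 0 0 0 0 1 0 0 1 ∧
    ∀ sh sl dH dL bhH blH bhL blL,
      IsPBE θ pth ptl pd Fh Fl cH cL sh sl dH dL bhH blH bhL blL →
      sh = 0 ∧ sl = 0 ∧ dH = 0 ∧ dL = 0 ∧
        bhH = 1 ∧ blH = 0 ∧ bhL = 0 ∧ blL = 1 := by

  have h01 : (0:ℝ) ∈ Icc (0:ℝ) 1 := by constructor <;> norm_num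
  have h11 : (1:ℝ) ∈ Icc (0:ℝ) 1 := by constructor <;> norm_num
  have hθ0 := hθ.1
  have hθ1 := hθ.2
  constructor
  · refine ⟨h01, h01, h01, h01, h11, by norm_num, h01, by norm_num,
      ?_, ?_, ?_, ?_, ?_, ?_, ?_, ?_⟩
    · intro h; linarith
    · intro _; nlinarith [hA1.1]
    · intro h; linarith
    · intro _; nlinarith
    · intro x hx; nlinarith [hx.1]
    · intro x hx; nlinarith [hx.1]
    · intro _; field_simp; ring
    · intro _; simp
  · rintro sh sl dH dL bhH blH bhL blL
      ⟨hsh, hsl, hdH, hdL, hbhH, hblH, hbhL, hblL, hh1, hh2, hl1, hl2, hopH, hopL, hbc1, hbc2⟩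
    have hsl0 : sl = 0 := by
      by_contra hne
      have hslpos : 0 < sl := lt_of_le_of_ne hsl.1 (Ne.symm hne)
      have hlr := hl1 hslpos
      have hFld : 0 ≤ Fl * dH := mul_nonneg hFl hdH.1
      rcases eq_or_lt_of_le hsh.1 with h0 | hshpos
      · have e1 : cL 0 sl < cL 0 0 := (hA2Ll 0 h01) h01 ⟨le_of_lt hslpos, hsl.2⟩ hslpos
        have e2 : cH 0 0 < cH 0 sl := (hA2Hl 0 h01) h01 ⟨le_of_lt hslpos, hsl.2⟩ hslpos
        rw [← h0] at hlr
        linarith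
      · have hhr := hh1 hshpos
        have hFhd : 0 ≤ Fh * dL := mul_nonneg hFh hdL.1
        linarith
    subst hsl0
    have hsh0 : sh = 0 := by
      by_contra hne
      have hshpos : 0 < sh := lt_of_le_of_ne hsh.1 (Ne.symm hne)
      have hhr := hh1 hshpos
      have hFhd : 0 ≤ Fh * dL := mul_nonneg hFh hdL.1
      have e1 : cH sh 0 < cH 0 0 := (hA2Hh 0 h01) h01 hsh hshpos
      have e2 : cL 0 0 < cL sh 0 := (hA2Lh 0 h01) h01 hsh hshpos
      linarith [hA1.1]
    subst hsh0
    have hden1 : 0 < θ * (1 - 0) + (1 - θ) * 0 := by linarith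
    have hden2 : 0 < θ * 0 + (1 - θ) * (1 - 0) := by linarith
    have hB1 : bhH = 1 := by
      rw [hbc1 hden1]; field_simp; ring
    have hB2 : bhL = 0 := by
      rw [hbc2 hden2]; simp
    subst hB1; subst hB2
    have hblH0 : blH = 0 := by rw [hblH]; ring
    have hblL1 : blL = 1 := by rw [hblL]; ring
    have hdH0 : dH = 0 := by
      have h0le := hopH 0 h01
      rw [hblH0] at h0le
      have : dH ≤ 0 := by nlinarith
      exact le_antisymm this hdH.1
    have hdL0 : dL = 0 := by
      have h0le := hopL 0 h01
      have : dL ≤ 0 := by nlinarith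
      exact le_antisymm this hdL.1
    exact ⟨rfl, rfl, hdH0, hdL0, rfl, hblH0, rfl, hblL1⟩
end

section
/- (Regime B, interior misbehavior.) Suppose p^t_l < Δc^θ(0). Then in any PBE (σ*, β*), the type l misbehavior rate satisfies 0 < σ^t*_l < 1. -/
open Set

/-! When type `l` never misbehaves and some type `h` agents stay on `H`, server `H` carries only
type `h` agents, so the operator does not inspect it and type `l` weighs only its misbehavior
cost `pᵗ_l` against the cost gap `c_L - c_H`; by monotonicity that gap is at least
`Δcᵗʰ(0) > pᵗ_l`, so misbehaving pays. If instead all type `h` agents misbehave, their own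
incentive constraint forces the gap to be `≤ 0`.
When every type `l` agent misbehaves, either type `h` misbehaves as well, and adding the two
incentive constraints bounds `pᵗ_h + pᵗ_l` plus the expected fines by `0`, or it does not, and type `l` would have to
prefer `H` at `(0, 1)`, against (A1). -/

theorem eq_zero_of_forall_mul_le_mul_of_neg {a d : ℝ} (ha : a < 0) (hd : 0 ≤ d)
    (hmax : ∀ x ∈ Icc (0:ℝ) 1, a * x ≤ a * d) : d = 0 := by
  have h0 := hmax 0 ⟨le_rfl, zero_le_one⟩
  nlinarith

theorem cost_gap_le_cost_gap {cH cL : ℝ → ℝ → ℝ} {x y : ℝ}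
    (hH : AntitoneOn (fun x => cH x y) (Icc 0 1)) (hL : MonotoneOn (fun x => cL x y) (Icc 0 1))
    (hx : x ∈ Icc (0:ℝ) 1) : cL 0 y - cH 0 y ≤ cL x y - cH x y := by
  have h0 : (0:ℝ) ∈ Icc (0:ℝ) 1 := ⟨le_rfl, zero_le_one⟩
  linarith [hH h0 hx hx.1, hL h0 hx hx.1]

namespace IsPBE

variable {θ pth ptl pd Fh Fl : ℝ} {cH cL : ℝ → ℝ → ℝ} {sh sl dH dL bhH blH bhL blL : ℝ}

theorem inspectH_eq_zero (hθ : 0 < θ) (hpd : 0 < pd)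
    (hPBE : IsPBE θ pth ptl pd Fh Fl cH cL sh sl dH dL bhH blH bhL blL)
    (hsl : sl = 0) (hsh : sh < 1) : dH = 0 := by
  obtain ⟨-, -, hdH, -, -, hblH, -, -, -, -, -, -, hOpH, -, hBH, -⟩ := hPBE
  subst hsl
  have hmass : 0 < θ * (1 - sh) := mul_pos hθ (sub_pos.mpr hsh)
  have hbhH : bhH = 1 := by
    rw [hBH (by simpa using hmass), mul_zero, add_zero, div_self hmass.ne']
  rw [hblH, hbhH, sub_self, mul_zero, add_zero] at hOpH
  exact eq_zero_of_forall_mul_le_mul_of_neg (neg_neg_of_pos hpd) hdH.1 hOpH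

theorem cost_gap_le_of_sl_eq_zero (hθ : 0 < θ) (hpth : 0 ≤ pth) (hptl : 0 < ptl)
    (hpd : 0 < pd) (hFh : 0 ≤ Fh)
    (hPBE : IsPBE θ pth ptl pd Fh Fl cH cL sh sl dH dL bhH blH bhL blL) (hsl : sl = 0) :
    cL sh 0 - cH sh 0 ≤ ptl := by
  have hdH : sh < 1 → dH = 0 := hPBE.inspectH_eq_zero hθ hpd hsl
  obtain ⟨hsh, -, -, hdL, -, -, -, -, hSRh, -, -, hSRl, -⟩ := hPBE
  subst hsl
  rcases hsh.2.lt_or_eq with hsh1 | rfl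
  · have := hSRl zero_lt_one
    rw [hdH hsh1, mul_zero] at this
    linarith
  · have := hSRh zero_lt_one
    linarith [mul_nonneg hFh hdL.1]

theorem sl_pos (hθ : 0 < θ) (hpth : 0 ≤ pth) (hptl : 0 < ptl) (hpd : 0 < pd) (hFh : 0 ≤ Fh)
    (hH : AntitoneOn (fun x => cH x 0) (Icc 0 1)) (hL : MonotoneOn (fun x => cL x 0) (Icc 0 1))
    (hPBE : IsPBE θ pth ptl pd Fh Fl cH cL sh sl dH dL bhH blH bhL blL)
    (hreg : ptl < cL 0 0 - cH 0 0) : 0 < sl := by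
  have hsl_nonneg : 0 ≤ sl := hPBE.2.1.1
  refine hsl_nonneg.lt_of_ne' fun hsl => ?_
  have hgap := hPBE.cost_gap_le_of_sl_eq_zero hθ hpth hptl hpd hFh hsl
  linarith [cost_gap_le_cost_gap hH hL hPBE.1]

theorem sl_lt_one (hpth : 0 ≤ pth) (hptl : 0 < ptl) (hFh : 0 ≤ Fh) (hFl : 0 ≤ Fl)
    (hA1 : cL 0 1 < cH 0 1)
    (hPBE : IsPBE θ pth ptl pd Fh Fl cH cL sh sl dH dL bhH blH bhL blL) : sl < 1 := by
  obtain ⟨hsh, hsl, hdH, hdL, -, -, -, -, hSRh, -, hSRl, -⟩ := hPBE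
  refine hsl.2.lt_of_ne fun hsl1 => ?_
  subst hsl1
  have hl := hSRl zero_lt_one
  have hFldH := mul_nonneg hFl hdH.1
  rcases hsh.1.lt_or_eq with hsh0 | rfl
  · linarith [hSRh hsh0, mul_nonneg hFh hdL.1]
  · linarith

end IsPBE

theorem regime_B_interior_general
    (θ pth ptl pd Fh Fl : ℝ) (cH cL : ℝ → ℝ → ℝ)
    (hθ : θ ∈ Ioo (0:ℝ) 1) (hpth : 0 ≤ pth) (hptl : 0 < ptl)
    (hpd : 0 < pd) (hFh : 0 ≤ Fh) (hFl : 0 ≤ Fl)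
    (hA1 : cH 0 0 < cL 0 0 ∧ cL 0 1 < cH 0 1)
    (hA2Hh : ∀ y ∈ Icc (0:ℝ) 1, StrictAntiOn (fun x => cH x y) (Icc 0 1))
    (hA2Lh : ∀ y ∈ Icc (0:ℝ) 1, StrictMonoOn (fun x => cL x y) (Icc 0 1))
    (sh sl dH dL bhH blH bhL blL : ℝ)
    (hPBE : IsPBE θ pth ptl pd Fh Fl cH cL sh sl dH dL bhH blH bhL blL)
    (hreg : ptl < cL 0 0 - cH 0 0) :
    0 < sl ∧ sl < 1 := by
  have h0 : (0:ℝ) ∈ Icc (0:ℝ) 1 := ⟨le_rfl, zero_le_one⟩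
  exact ⟨hPBE.sl_pos hθ.1 hpth hptl hpd hFh (hA2Hh 0 h0).antitoneOn (hA2Lh 0 h0).monotoneOn hreg,
    hPBE.sl_lt_one hpth hptl hFh hFl hA1.2⟩

/-- Regime B: if `pᵗ_l < Δcᵗʰ(0)`, then in any PBE the type l misbehavior rate is
interior: `0 < sl < 1`. -/
theorem regime_B_interior
    (θ pth ptl pd Fh Fl : ℝ) (cH cL : ℝ → ℝ → ℝ)
    (hθ : θ ∈ Ioo (0:ℝ) 1) (hpth : 0 ≤ pth) (hptl : 0 < ptl)
    (hpd : 0 < pd) (hFh : 0 ≤ Fh) (hFl : 0 ≤ Fl)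
    (hA1 : cH 0 0 < cL 0 0 ∧ cL 0 1 < cH 0 1)
    (hA2Hh : ∀ y ∈ Icc (0:ℝ) 1, StrictAntiOn (fun x => cH x y) (Icc 0 1))
    (hA2Hl : ∀ x ∈ Icc (0:ℝ) 1, StrictMonoOn (fun y => cH x y) (Icc 0 1))
    (hA2Lh : ∀ y ∈ Icc (0:ℝ) 1, StrictMonoOn (fun x => cL x y) (Icc 0 1))
    (hA2Ll : ∀ x ∈ Icc (0:ℝ) 1, StrictAntiOn (fun y => cL x y) (Icc 0 1))
    (sh sl dH dL bhH blH bhL blL : ℝ)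
    (hPBE : IsPBE θ pth ptl pd Fh Fl cH cL sh sl dH dL bhH blH bhL blL)
    (hreg : ptl < cL 0 0 - cH 0 0) :
    0 < sl ∧ sl < 1 :=
  regime_B_interior_general θ pth ptl pd Fh Fl cH cL hθ hpth hptl hpd hFh hFl hA1 hA2Hh hA2Lh sh sl
    dH dL bhH blH bhL blL hPBE hreg
end

section
/- (Subregime B2.) Suppose F_l > 0, 0 < p^d < (1−θ)·F_l and max{Δc^θ(σ̂^t_l) − F_l, 0} < p^t_l < Δc^θ(σ̂^t_l). Then there is a unique PBE (σ*, β*); it satisfies σ^t*_h = 0, σ^t*_l = σ̂^t_l, σ^d*_H = (Δc^θ(σ̂^t_l) − p^t_l)/F_l ∈ (0,1), σ^d*_L = 0, β*(h|H) = 1 − p^d/F_l, β*(l|H) = p^d/F_l, β*(h|L) = 0 and β*(l|L) = 1. -/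
open Set

set_option maxHeartbeats 400000 in
/-- Subregime B2: the unique PBE has misbehavior rate equal to the threshold `σ̂` and
interior inspection rate `(Δcᵗʰ(σ̂) - pᵗ_l)/Fl`. -/
theorem subregime_B2
    (θ pth ptl pd Fh Fl : ℝ) (cH cL : ℝ → ℝ → ℝ)
    (hθ : θ ∈ Ioo (0:ℝ) 1) (hpth : 0 ≤ pth) (hptl : 0 < ptl)
    (hpd : 0 < pd) (hFh : 0 ≤ Fh) (hFl : 0 ≤ Fl)
    (hA1 : cH 0 0 < cL 0 0 ∧ cL 0 1 < cH 0 1)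
    (hA2Hh : ∀ y ∈ Icc (0:ℝ) 1, StrictAntiOn (fun x => cH x y) (Icc 0 1))
    (hA2Hl : ∀ x ∈ Icc (0:ℝ) 1, StrictMonoOn (fun y => cH x y) (Icc 0 1))
    (hA2Lh : ∀ y ∈ Icc (0:ℝ) 1, StrictMonoOn (fun x => cL x y) (Icc 0 1))
    (hA2Ll : ∀ x ∈ Icc (0:ℝ) 1, StrictAntiOn (fun y => cL x y) (Icc 0 1))
    (hFl' : 0 < Fl) (hpdlt : pd < (1 - θ) * Fl)
    (hcond : max (cL 0 (pd * θ / ((1 - θ) * (Fl - pd))) - cH 0 (pd * θ / ((1 - θ) * (Fl - pd))) - Fl) 0 < ptl ∧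
      ptl < cL 0 (pd * θ / ((1 - θ) * (Fl - pd))) - cH 0 (pd * θ / ((1 - θ) * (Fl - pd)))) :
    (∃ sh sl dH dL bhH blH bhL blL,
      IsPBE θ pth ptl pd Fh Fl cH cL sh sl dH dL bhH blH bhL blL) ∧
    ∀ sh sl dH dL bhH blH bhL blL,
      IsPBE θ pth ptl pd Fh Fl cH cL sh sl dH dL bhH blH bhL blL →
      sh = 0 ∧ sl = pd * θ / ((1 - θ) * (Fl - pd)) ∧
        dH = (cL 0 (pd * θ / ((1 - θ) * (Fl - pd))) - cH 0 (pd * θ / ((1 - θ) * (Fl - pd))) - ptl) / Fl ∧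
        dH ∈ Ioo (0:ℝ) 1 ∧ dL = 0 ∧
        bhH = 1 - pd / Fl ∧ blH = pd / Fl ∧ bhL = 0 ∧ blL = 1 := by

  obtain ⟨hθ0, hθ1⟩ := hθ
  obtain ⟨hc1, hc2⟩ := hcond
  have h1θ : 0 < 1 - θ := by linarith
  have hpdFl : pd < Fl := by nlinarith
  have hden : 0 < (1 - θ) * (Fl - pd) := by nlinarith
  set σ := pd * θ / ((1 - θ) * (Fl - pd)) with hσdef
  have hσeq : σ * ((1 - θ) * (Fl - pd)) = pd * θ := by
    rw [hσdef]; field_simp; exact div_self (sub_pos.mpr hpdFl).ne'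
  have hσ0 : 0 < σ := by
    rw [hσdef]; exact div_pos (by nlinarith) hden
  have hσ1 : σ < 1 := by
    rw [hσdef, div_lt_one hden]; nlinarith
  have hσIcc : σ ∈ Icc (0:ℝ) 1 := ⟨le_of_lt hσ0, le_of_lt hσ1⟩
  have hΔpt : ptl < cL 0 σ - cH 0 σ := hc2
  have hΔFl : cL 0 σ - cH 0 σ - Fl < ptl := lt_of_le_of_lt (le_max_left _ _) hc1
  -- monotonicity of Δc in σ_l
  have hDmono : ∀ a ∈ Icc (0:ℝ) 1, ∀ b ∈ Icc (0:ℝ) 1, a < b →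
      cL 0 b - cH 0 b < cL 0 a - cH 0 a := by
    intro a ha b hb hab
    have h1 := hA2Ll 0 (by norm_num) ha hb hab
    have h2 := hA2Hl 0 (by norm_num) ha hb hab
    simp only at h1 h2
    linarith
  have h0Icc : (0:ℝ) ∈ Icc (0:ℝ) 1 := by norm_num
  have h1Icc : (1:ℝ) ∈ Icc (0:ℝ) 1 := by norm_num
  set d := (cL 0 σ - cH 0 σ - ptl) / Fl with hd
  have hd0 : 0 < d := by
    rw [hd]; exact div_pos (by linarith) hFl'
  have hd1 : d < 1 := by
    rw [hd, div_lt_one hFl']; linarith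
  have hFlne : Fl ≠ 0 := ne_of_gt hFl'
  have hFld : Fl * d = cL 0 σ - cH 0 σ - ptl := by
    rw [hd]; field_simp
  -- key belief computation at sl = σ
  have hdenH : 0 < θ * (1 - 0) + (1 - θ) * σ := by nlinarith
  have hbelief : θ * (1 - 0) / (θ * (1 - 0) + (1 - θ) * σ) = 1 - pd / Fl := by
    rw [hσdef]
    rw [div_eq_iff (by rw [← hσdef]; linarith [hdenH])]
    have hne : Fl - pd ≠ 0 := (sub_pos.mpr hpdFl).ne'
    field_simp
    ring
  constructor
  · -- existence
    refine ⟨0, σ, d, 0, 1 - pd / Fl, pd / Fl, 0, 1,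
      ⟨by norm_num, hσIcc, ⟨le_of_lt hd0, le_of_lt hd1⟩, by norm_num,
      ⟨by nlinarith [div_pos hpd hFl', (div_lt_one hFl').2 hpdFl], by
        have := div_pos hpd hFl'; linarith⟩, by ring,
      by norm_num, by norm_num, ?_, ?_, ?_, ?_, ?_, ?_, ?_, ?_⟩⟩
    · intro h; norm_num at h
    · intro _
      have : Fh * 0 = 0 := by ring
      rw [this]
      linarith
    · intro _
      rw [hFld]; linarith
    · intro _
      rw [hFld]; linarith
    · intro x hx
      have hco : -pd + Fl * (pd / Fl) = 0 := by field_simp; ring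
      rw [hco]; simp
    · intro x hx
      have hco : -pd + Fh * 0 = -pd := by ring
      rw [hco]
      nlinarith [hx.1, hx.2]
    · intro _
      exact hbelief.symm
    · intro h
      simp only [mul_zero, zero_div]
  · -- uniqueness
    intro sh sl dH dL bhH blH bhL blL hPBE
    obtain ⟨hsh, hsl, hdH, hdL, hbhH, hblH, hbhL, hblL,
      hr1, hr2, hr3, hr4, hoH, hoL, hconH, hconL⟩ := hPBE
    have hshIcc : sh ∈ Icc (0:ℝ) 1 := hsh
    have hslIcc : sl ∈ Icc (0:ℝ) 1 := hsl
    -- Step 1: sh = 0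
    have hsh0 : sh = 0 := by
      by_contra hne
      have hshpos : 0 < sh := lt_of_le_of_ne hsh.1 (Ne.symm hne)
      have h1 := hr1 hshpos
      have hle : cL sh sl ≤ cH sh sl := by linarith only [h1, hpth, mul_nonneg hFh hdL.1]
      rcases eq_or_lt_of_le hsl.1 with hsl0 | hslpos
      · -- sl = 0
        have hL := hA2Lh 0 h0Icc h0Icc hshIcc hshpos
        have hHH := hA2Hh 0 h0Icc h0Icc hshIcc hshpos
        simp only at hL hHH
        rw [← hsl0] at hle
        linarith only [hL, hHH, hle, hA1.1]
      · -- sl > 0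
        have h3 := hr3 hslpos
        linarith only [h3, hle, hptl, mul_nonneg (le_of_lt hFl') hdH.1]
    subst hsh0
    -- Step 2: 0 < sl
    have hslpos : 0 < sl := by
      rcases eq_or_lt_of_le hsl.1 with hsl0 | hslpos
      · exfalso
        subst hsl0
        have hθne : θ ≠ 0 := ne_of_gt hθ0
        have hdenH0 : 0 < θ * (1 - 0) + (1 - θ) * 0 := by
          rw [mul_zero, add_zero]; linarith
        have hbhH1 : bhH = 1 := by
          rw [hconH hdenH0]
          rw [mul_zero, add_zero]
          field_simp
        have hblH0 : blH = 0 := by rw [hblH, hbhH1]; ring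
        have hdH0 : dH = 0 := by
          have h0 := hoH 0 h0Icc
          rw [hblH0] at h0
          have h0' : 0 ≤ -pd * dH := by linarith only [h0]
          have hle0 : dH ≤ 0 := by nlinarith only [h0', hpd]
          exact le_antisymm hle0 hdH.1
        have h4 := hr4 (by norm_num)
        rw [hdH0] at h4
        have hD0 : cL 0 σ - cH 0 σ < cL 0 0 - cH 0 0 := hDmono 0 h0Icc σ hσIcc hσ0
        linarith only [h4, hD0, hΔpt]
      · exact hslpos
    -- Step 3: sl < 1
    have hsl1 : sl < 1 := by
      rcases lt_or_eq_of_le hsl.2 with h | h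
      · exact h
      · exfalso
        have h3 := hr3 hslpos
        rw [h] at h3
        linarith only [h3, hptl, mul_nonneg (le_of_lt hFl') hdH.1, hA1.2]
    -- Step 4: indifference of type l
    have hE : cL 0 sl - cH 0 sl = ptl + Fl * dH := by
      have h3 := hr3 hslpos
      have h4 := hr4 hsl1
      linarith only [h3, h4]
    -- beliefs on H
    have hdenH0 : 0 < θ * (1 - 0) + (1 - θ) * sl := by
      linarith only [hθ0, mul_nonneg (le_of_lt h1θ) hsl.1]
    have hbhHeq := hconH hdenH0
    have hblHeq : blH * (θ + (1 - θ) * sl) = (1 - θ) * sl := by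
      rw [hblH, hbhHeq]
      field_simp
      ring
    -- Step 5: sl = σ
    have hslσ : sl = σ := by
      rcases lt_trichotomy sl σ with hlt | heq | hgt
      · exfalso
        -- coefficient negative ⟹ dH = 0 ⟹ contradiction
        have hcoef : -pd + Fl * blH < 0 := by
          have h1 : (1 - θ) * sl * (Fl - pd) < pd * θ := by
            linarith only [mul_lt_mul_of_pos_right hlt hden, hσeq]
          have hh : Fl * (blH * (θ + (1 - θ) * sl)) = Fl * ((1 - θ) * sl) := by
            rw [hblHeq]
          have h2 : Fl * blH * (θ + (1 - θ) * sl) < pd * (θ + (1 - θ) * sl) := by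
            linarith only [hh, h1]
          have hdpos : 0 < θ + (1 - θ) * sl := by
            linarith only [hθ0, mul_nonneg (le_of_lt h1θ) hsl.1]
          have h3 := lt_of_mul_lt_mul_right h2 hdpos.le
          linarith only [h3]
        have hdH0 : dH = 0 := by
          have h0 := hoH 0 h0Icc
          have h0' : 0 ≤ (-pd + Fl * blH) * dH := by linarith only [h0]
          have hle0 : dH ≤ 0 := by nlinarith only [h0', hcoef, hdH.1]
          exact le_antisymm hle0 hdH.1
        rw [hdH0] at hE
        have hD : cL 0 σ - cH 0 σ < cL 0 sl - cH 0 sl :=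
          hDmono sl hsl σ hσIcc hlt
        linarith only [hE, hD, hΔpt]
      · exact heq
      · exfalso
        have hcoef : 0 < -pd + Fl * blH := by
          have h1 : pd * θ < (1 - θ) * sl * (Fl - pd) := by
            linarith only [mul_lt_mul_of_pos_right hgt hden, hσeq]
          have hh : Fl * (blH * (θ + (1 - θ) * sl)) = Fl * ((1 - θ) * sl) := by
            rw [hblHeq]
          have h2 : pd * (θ + (1 - θ) * sl) < Fl * blH * (θ + (1 - θ) * sl) := by
            linarith only [hh, h1]
          have hdpos : 0 < θ + (1 - θ) * sl := by
            linarith only [hθ0, mul_nonneg (le_of_lt h1θ) hsl.1]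
          have h3 := lt_of_mul_lt_mul_right h2 hdpos.le
          linarith only [h3]
        have hdH1 : dH = 1 := by
          have h1 := hoH 1 h1Icc
          have h1' : 1 ≤ dH := by nlinarith only [h1, hcoef, hdH.2]
          exact le_antisymm hdH.2 h1'
        rw [hdH1] at hE
        have hD : cL 0 sl - cH 0 sl < cL 0 σ - cH 0 σ :=
          hDmono σ hσIcc sl hsl hgt
        linarith only [hE, hD, hΔFl]
    subst hslσ
    -- conclusions
    have hbhHval : bhH = 1 - pd / Fl := by rw [hbhHeq]; exact hbelief
    have hblHval : blH = pd / Fl := by rw [hblH, hbhHval]; ring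
    have hdHval : dH = (cL 0 σ - cH 0 σ - ptl) / Fl := by
      rw [eq_div_iff hFlne]; linarith
    have hbhLval : bhL = 0 := by
      have hdenL : 0 < θ * 0 + (1 - θ) * (1 - σ) := by
        rw [mul_zero, zero_add]
        exact mul_pos h1θ (by linarith)
      rw [hconL hdenL]
      simp
    have hdLval : dL = 0 := by
      have h0 := hoL 0 h0Icc
      rw [hbhLval] at h0
      have h0' : 0 ≤ -pd * dL := by linarith only [h0]
      have hle0 : dL ≤ 0 := by nlinarith only [h0', hpd]
      exact le_antisymm hle0 hdL.1
    refine ⟨rfl, rfl, hdHval, ⟨?_, ?_⟩, hdLval, hbhHval, hblHval, hbhLval, by rw [hblL, hbhLval]; ring⟩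
    · rw [hdHval]; exact div_pos (by linarith) hFl'
    · rw [hdHval, div_lt_one hFl']; linarith
end

section
/- (Comparative statics in subregime B2.) Fix θ ∈ (0,1) and F_l > 0. The threshold σ̂^t_l(p^d) = p^d·θ/((1−θ)(F_l − p^d)) is strictly increasing in p^d on (0, (1−θ)F_l], and for fixed p^d ∈ (0, F_l) the map θ ↦ p^d·θ/((1−θ)(F_l − p^d)) is strictly increasing on (0,1). Consequently, if Δc^θ : [0,1] → ℝ is strictly decreasing, then along the subregime-B2 equilibria the misbehavior rate σ^t*_l = σ̂^t_l(p^d) is strictly increasing in p^d and the inspection rate σ^d*_H = (Δc^θ(σ̂^t_l(p^d)) − p^t_l)/F_l is strictly decreasing in p^d on (0, (1−θ)F_l]. -/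
/-!
Up to the positive factor `θ / (1 - θ)` the threshold is `p ↦ p / (F - p)`, and up to the
positive factor `p / (F - p)` it is `θ ↦ θ / (1 - θ)`; both are strictly increasing below
their pole. On `(0, (1 - θ) F]` the threshold takes values in `[0, 1]`, so composing with the
strictly decreasing `Δc` and the increasing affine map `x ↦ (x - p^t_l) / F_l` gives a strictly
decreasing inspection rate.
-/

open Set

lemma strictMonoOn_div_sub_self {F : ℝ} (hF : 0 < F) :
    StrictMonoOn (fun x => x / (F - x)) (Iio F) := by
  intro a ha b hb hab
  have hFa : 0 < F - a := sub_pos.mpr ha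
  have hFb : 0 < F - b := sub_pos.mpr hb
  simp only
  rw [div_lt_div_iff₀ hFa hFb]
  nlinarith

noncomputable def misbehaviorThreshold (θ F p : ℝ) : ℝ := p * θ / ((1 - θ) * (F - p))

lemma misbehaviorThreshold_eq (θ F p : ℝ) :
    misbehaviorThreshold θ F p = θ / (1 - θ) * (p / (F - p)) := by
  rw [misbehaviorThreshold, div_mul_div_comm, mul_comm p θ]

lemma strictMonoOn_misbehaviorThreshold {θ F : ℝ} (hθ : θ ∈ Ioo 0 1) (hF : 0 < F) :
    StrictMonoOn (misbehaviorThreshold θ F) (Iio F) := by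
  have hfactor : 0 < θ / (1 - θ) := div_pos hθ.1 (sub_pos.mpr hθ.2)
  rw [funext (misbehaviorThreshold_eq θ F)]
  exact (strictMono_mul_left_of_pos hfactor).comp_strictMonoOn (strictMonoOn_div_sub_self hF)

lemma strictMonoOn_misbehaviorThreshold_fraction {F p : ℝ} (hp : 0 < p) (hpF : p < F) :
    StrictMonoOn (fun θ => misbehaviorThreshold θ F p) (Iio 1) := by
  have hfactor : 0 < p / (F - p) := div_pos hp (sub_pos.mpr hpF)
  simp only [misbehaviorThreshold_eq, mul_comm _ (p / (F - p))]
  exact (strictMono_mul_left_of_pos hfactor).comp_strictMonoOn (strictMonoOn_div_sub_self one_pos)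

lemma Iic_one_sub_mul_subset_Iio {θ F : ℝ} (hθ : 0 < θ) (hF : 0 < F) :
    Iic ((1 - θ) * F) ⊆ Iio F :=
  fun _ hp => (mem_Iic.mp hp).trans_lt (by nlinarith)

lemma mapsTo_misbehaviorThreshold {θ F : ℝ} (hθ : θ ∈ Ioo 0 1) (hF : 0 < F) :
    MapsTo (misbehaviorThreshold θ F) (Ioc 0 ((1 - θ) * F)) (Icc 0 1) := by
  intro p hp
  have h1θ : 0 < 1 - θ := sub_pos.mpr hθ.2
  have hFp : 0 < F - p := sub_pos.mpr (Iic_one_sub_mul_subset_Iio hθ.1 hF hp.2)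
  have hden : 0 < (1 - θ) * (F - p) := mul_pos h1θ hFp
  refine ⟨div_nonneg (mul_nonneg hp.1.le hθ.1.le) hden.le, div_le_one_of_le₀ ?_ hden.le⟩
  -- `(1 - θ) (F - p) - p θ = (1 - θ) F - p`
  nlinarith [hp.2]

theorem comparative_statics_B2_general (θ Fl ptl : ℝ)
    (hθ : θ ∈ Ioo (0:ℝ) 1) (hFl : 0 < Fl) (Δc : ℝ → ℝ) :
    StrictMonoOn (fun pd => pd * θ / ((1 - θ) * (Fl - pd))) (Ioc 0 ((1 - θ) * Fl)) ∧
    (∀ pd : ℝ, 0 < pd → pd < Fl →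
      StrictMonoOn (fun t => pd * t / ((1 - t) * (Fl - pd))) (Ioo (0:ℝ) 1)) ∧
    (StrictAntiOn Δc (Icc 0 1) →
      StrictMonoOn (fun pd => pd * θ / ((1 - θ) * (Fl - pd))) (Ioc 0 ((1 - θ) * Fl)) ∧
      StrictAntiOn (fun pd => (Δc (pd * θ / ((1 - θ) * (Fl - pd))) - ptl) / Fl)
        (Ioc 0 ((1 - θ) * Fl))) := by
  have hmono : StrictMonoOn (misbehaviorThreshold θ Fl) (Ioc 0 ((1 - θ) * Fl)) :=
    (strictMonoOn_misbehaviorThreshold hθ hFl).mono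
      (Ioc_subset_Iic_self.trans (Iic_one_sub_mul_subset_Iio hθ.1 hFl))
  refine ⟨hmono, fun pd hpd hpdF => ?_, fun hΔc => ⟨hmono, ?_⟩⟩
  · exact (strictMonoOn_misbehaviorThreshold_fraction hpd hpdF).mono Ioo_subset_Iio_self
  · have hrate : StrictMono fun x : ℝ => (x - ptl) / Fl := fun _ _ h =>
      div_lt_div_of_pos_right (sub_lt_sub_right h ptl) hFl
    exact hrate.comp_strictAntiOn
      (hΔc.comp_strictMonoOn hmono (mapsTo_misbehaviorThreshold hθ hFl))

/-- Comparative statics in subregime B2: the threshold `σ̂(pd)` is strictly increasing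
in `pd` and in `θ`; hence along subregime-B2 equilibria the misbehavior rate is strictly
increasing and the inspection rate strictly decreasing in `pd`. -/
theorem comparative_statics_B2 (θ Fl ptl : ℝ)
    (hθ : θ ∈ Ioo (0:ℝ) 1) (hFl : 0 < Fl) (hptl : 0 < ptl) (Δc : ℝ → ℝ) :
    StrictMonoOn (fun pd => pd * θ / ((1 - θ) * (Fl - pd))) (Ioc 0 ((1 - θ) * Fl)) ∧
    (∀ pd : ℝ, 0 < pd → pd < Fl →
      StrictMonoOn (fun t => pd * t / ((1 - t) * (Fl - pd))) (Ioo (0:ℝ) 1)) ∧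
    (StrictAntiOn Δc (Icc 0 1) →
      StrictMonoOn (fun pd => pd * θ / ((1 - θ) * (Fl - pd))) (Ioc 0 ((1 - θ) * Fl)) ∧
      StrictAntiOn (fun pd => (Δc (pd * θ / ((1 - θ) * (Fl - pd))) - ptl) / Fl)
        (Ioc 0 ((1 - θ) * Fl))) :=
  comparative_statics_B2_general θ Fl ptl hθ hFl Δc
end

section
/- (High fine precludes full inspection.) Suppose F_l > Δc^θ(0). Then in any PBE (σ*, β*), σ^d*_H < 1: the operator never inspects all agents on server H. -/
/-!
Suppose the operator inspects everyone on server H. Inspection is only optimal if the operator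
believes some type l agents are on H, so by Bayes' rule type l agents misbehave, or else every
type h agent misbehaves. The latter is impossible: with no type l agent on H, server H is cheaper
for type h agents. So type l agents misbehave, which makes H cheaper than L and keeps type h
agents honest. Then the cost gap `Δcᵗʰ(σₗ)` must absorb the whole fine `Fₗ`, contradicting
`Fₗ > Δcᵗʰ(0) > Δcᵗʰ(σₗ)`.
-/

open Set

/-- The paper's `Δcᵗʰ(σₗ)`. -/
def costGap (cH cL : ℝ → ℝ → ℝ) (s : ℝ) : ℝ := cL 0 s - cH 0 s

lemma costGap_strictAntiOn {cH cL : ℝ → ℝ → ℝ}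
    (hH : StrictMonoOn (fun y => cH 0 y) (Icc 0 1))
    (hL : StrictAntiOn (fun y => cL 0 y) (Icc 0 1)) :
    StrictAntiOn (costGap cH cL) (Icc 0 1) := fun a ha b hb hab => by
  have := hH ha hb hab
  have := hL ha hb hab
  simp only [costGap]
  linarith

lemma costH_lt_costL_of_costH_lt_costL_zero {cH cL : ℝ → ℝ → ℝ} {x y : ℝ}
    (hH : AntitoneOn (fun x => cH x y) (Icc 0 1)) (hL : MonotoneOn (fun x => cL x y) (Icc 0 1))
    (hx : x ∈ Icc (0 : ℝ) 1) (h0 : cH 0 y < cL 0 y) : cH x y < cL x y :=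
  calc cH x y ≤ cH 0 y := hH (left_mem_Icc.2 zero_le_one) hx hx.1
    _ < cL 0 y := h0
    _ ≤ cL x y := hL (left_mem_Icc.2 zero_le_one) hx hx.1

namespace IsPBE

variable {θ pth ptl pd Fh Fl : ℝ} {cH cL : ℝ → ℝ → ℝ} {sh sl dH dL bhH blH bhL blL : ℝ}

lemma pd_le_of_full_inspection (h : IsPBE θ pth ptl pd Fh Fl cH cL sh sl dH dL bhH blH bhL blL)
    (hdH : dH = 1) : pd ≤ Fl * blH := by
  obtain ⟨-, -, -, -, -, -, -, -, -, -, -, -, hoptH, -⟩ := h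
  have := hoptH 0 (left_mem_Icc.2 zero_le_one)
  rw [hdH] at this
  linarith

lemma lowBeliefH_eq_zero_of_low_honest
    (h : IsPBE θ pth ptl pd Fh Fl cH cL sh sl dH dL bhH blH bhL blL)
    (hθ : 0 < θ) (hsh : sh < 1) (hsl : sl = 0) : blH = 0 := by
  obtain ⟨-, -, -, -, -, hblH, -, -, -, -, -, -, -, -, hbayes, -⟩ := h
  have hden : 0 < θ * (1 - sh) := mul_pos hθ (sub_pos.2 hsh)
  have hbhH := hbayes (by rw [hsl, mul_zero, add_zero]; exact hden)
  rw [hsl, mul_zero, add_zero, div_self hden.ne'] at hbhH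
  rw [hblH, hbhH, sub_self]

lemma costL_le_costH_of_high_misbehaves
    (h : IsPBE θ pth ptl pd Fh Fl cH cL sh sl dH dL bhH blH bhL blL)
    (hpth : 0 ≤ pth) (hFh : 0 ≤ Fh) (hsh : 0 < sh) : cL sh sl ≤ cH sh sl := by
  obtain ⟨-, -, -, hdL, -, -, -, -, hrational, -⟩ := h
  linarith [hrational hsh, mul_nonneg hFh hdL.1]

lemma costH_add_le_costL_of_low_misbehaves
    (h : IsPBE θ pth ptl pd Fh Fl cH cL sh sl dH dL bhH blH bhL blL)
    (hsl : 0 < sl) : cH sh sl + ptl + Fl * dH ≤ cL sh sl := by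
  obtain ⟨-, -, -, -, -, -, -, -, -, -, hrational, -⟩ := h
  linarith [hrational hsl]

end IsPBE

theorem high_fine_no_full_inspection_general
    (θ pth ptl pd Fh Fl : ℝ) (cH cL : ℝ → ℝ → ℝ)
    (hθ : θ ∈ Ioo (0:ℝ) 1) (hpth : 0 ≤ pth) (hptl : 0 < ptl)
    (hpd : 0 < pd) (hFh : 0 ≤ Fh)
    (hA1 : cH 0 0 < cL 0 0 ∧ cL 0 1 < cH 0 1)
    (hA2Hh : ∀ y ∈ Icc (0:ℝ) 1, StrictAntiOn (fun x => cH x y) (Icc 0 1))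
    (hA2Hl : ∀ x ∈ Icc (0:ℝ) 1, StrictMonoOn (fun y => cH x y) (Icc 0 1))
    (hA2Lh : ∀ y ∈ Icc (0:ℝ) 1, StrictMonoOn (fun x => cL x y) (Icc 0 1))
    (hA2Ll : ∀ x ∈ Icc (0:ℝ) 1, StrictAntiOn (fun y => cL x y) (Icc 0 1))
    (sh sl dH dL bhH blH bhL blL : ℝ)
    (hPBE : IsPBE θ pth ptl pd Fh Fl cH cL sh sl dH dL bhH blH bhL blL)
    (hfine : cL 0 0 - cH 0 0 < Fl) :
    dH < 1 := by
  have ⟨hsh01, hsl01, hdH01, _⟩ := hPBE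
  have h01 : (0 : ℝ) ∈ Icc (0 : ℝ) 1 := left_mem_Icc.2 zero_le_one
  have hFl : 0 < Fl := (sub_pos.2 hA1.1).trans hfine
  refine lt_of_le_of_ne hdH01.2 fun hdH => ?_
  have hblH : 0 < blH :=
    pos_of_mul_pos_right (hpd.trans_le (hPBE.pd_le_of_full_inspection hdH)) hFl.le
  rcases hsl01.1.eq_or_lt with hsl | hsl
  · have hsh : sh = 1 := by
      by_contra hsh
      exact hblH.ne' (hPBE.lowBeliefH_eq_zero_of_low_honest hθ.1
        (lt_of_le_of_ne hsh01.2 hsh) hsl.symm)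
    have hLH := hPBE.costL_le_costH_of_high_misbehaves hpth hFh (hsh ▸ one_pos)
    rw [hsh, ← hsl] at hLH
    exact hLH.not_gt (costH_lt_costL_of_costH_lt_costL_zero (hA2Hh 0 h01).antitoneOn
      (hA2Lh 0 h01).monotoneOn (right_mem_Icc.2 zero_le_one) hA1.1)
  · have hHL := hPBE.costH_add_le_costL_of_low_misbehaves hsl
    rw [hdH, mul_one] at hHL
    obtain rfl : 0 = sh := by
      refine (hsh01.1.eq_or_lt).resolve_right fun hsh => ?_
      linarith [hPBE.costL_le_costH_of_high_misbehaves hpth hFh hsh]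
    have hgap := costGap_strictAntiOn (hA2Hl 0 h01) (hA2Ll 0 h01) h01 ⟨hsl.le, hsl01.2⟩ hsl
    simp only [costGap] at hgap
    linarith

/-- High fine precludes full inspection: if `Fl > Δcᵗʰ(0)`, then in any PBE the
operator never inspects all agents on server H. -/
theorem high_fine_no_full_inspection
    (θ pth ptl pd Fh Fl : ℝ) (cH cL : ℝ → ℝ → ℝ)
    (hθ : θ ∈ Ioo (0:ℝ) 1) (hpth : 0 ≤ pth) (hptl : 0 < ptl)
    (hpd : 0 < pd) (hFh : 0 ≤ Fh) (hFl : 0 ≤ Fl)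
    (hA1 : cH 0 0 < cL 0 0 ∧ cL 0 1 < cH 0 1)
    (hA2Hh : ∀ y ∈ Icc (0:ℝ) 1, StrictAntiOn (fun x => cH x y) (Icc 0 1))
    (hA2Hl : ∀ x ∈ Icc (0:ℝ) 1, StrictMonoOn (fun y => cH x y) (Icc 0 1))
    (hA2Lh : ∀ y ∈ Icc (0:ℝ) 1, StrictMonoOn (fun x => cL x y) (Icc 0 1))
    (hA2Ll : ∀ x ∈ Icc (0:ℝ) 1, StrictAntiOn (fun y => cL x y) (Icc 0 1))
    (sh sl dH dL bhH blH bhL blL : ℝ)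
    (hPBE : IsPBE θ pth ptl pd Fh Fl cH cL sh sl dH dL bhH blH bhL blL)
    (hfine : cL 0 0 - cH 0 0 < Fl) :
    dH < 1 :=
  high_fine_no_full_inspection_general θ pth ptl pd Fh Fl cH cL hθ hpth hptl hpd hFh hA1 hA2Hh hA2Hl
    hA2Lh hA2Ll sh sl dH dL bhH blH bhL blL hPBE hfine
end
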